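/- arXiv:1609.00420 — 2 statements merged into one kernel-verified Lean document; each statement's English description precedes it below -/
import Mathlib

section
/- Let n ≥ 5, let K_{2,n−2} be the complete bipartite graph with parts {u, v} of size 2 and a part of size n−2, and let e = uv. Then S(K_{2,n−2}) > S(K_{2,n−2}+e); in particular, adding an edge to a graph can strictly decrease its von Neumann entropy. -/
set_option maxRecDepth 8000
set_option maxHeartbeats 1000000


open Matrix Real Finset

namespace VNE

variable {V : Type*} [Fintype V] [DecidableEq V]

/-- The density matrix `ρ(G) = L(G) / tr (L(G))` of a graph. -/
noncomputable def rho (G : SimpleGraph V) : Matrix V V ℝ :=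
  letI := Classical.decRel G.Adj
  ((G.lapMatrix ℝ).trace)⁻¹ • G.lapMatrix ℝ

lemma rho_isHermitian (G : SimpleGraph V) : (rho G).IsHermitian := by
  letI := Classical.decRel G.Adj
  have h : (G.lapMatrix ℝ).IsHermitian := (SimpleGraph.posSemidef_lapMatrix ℝ G).1
  unfold rho
  unfold Matrix.IsHermitian at h ⊢
  rw [Matrix.conjTranspose_smul, h, star_trivial]

/-- The eigenvalues of the density matrix of `G`. -/
noncomputable def eigs (G : SimpleGraph V) : V → ℝ :=
  (rho_isHermitian G).eigenvalues

/-- The von Neumann entropy of a graph. -/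
noncomputable def vnEntropy (G : SimpleGraph V) : ℝ :=
  ∑ v, -(eigs G v * Real.logb 2 (eigs G v))

/-- The Rényi α-entropy of a graph. -/
noncomputable def renyiEntropy (α : ℝ) (G : SimpleGraph V) : ℝ :=
  (1 / (1 - α)) * Real.logb 2 (∑ v, eigs G v ^ α)

/-- The Rényi 2-entropy of a graph, `−log₂ tr(ρ(G)²)`. -/
noncomputable def renyi2 (G : SimpleGraph V) : ℝ :=
  - Real.logb 2 ((rho G * rho G).trace)

/-- `tr₂(G) = tr(ρ(G)²)`. -/
noncomputable def tr2 (G : SimpleGraph V) : ℝ :=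
  (rho G * rho G).trace

/-- The degree of a vertex, as a real number. -/
noncomputable def deg (G : SimpleGraph V) (v : V) : ℝ :=
  letI := Classical.decRel G.Adj
  (G.degree v : ℝ)

/-- The degree sum `d_G` of a graph. -/
noncomputable def degSum (G : SimpleGraph V) : ℝ :=
  ∑ v, deg G v

/-- The star `K_{1,n-1}` on `n` vertices, with center the vertex `0`. -/
def starOn (n : ℕ) : SimpleGraph (Fin n) where
  Adj x y := x ≠ y ∧ (x.val = 0 ∨ y.val = 0)
  symm := ⟨fun _ _ h => ⟨h.1.symm, h.2.symm⟩⟩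
  loopless := ⟨fun _ h => h.1 rfl⟩

open Polynomial in
lemma charpoly_eq_of_conj (A P Q D : Matrix V V ℝ) (hQP : Q * P = 1) (hA : A = P * D * Q) :
    A.charpoly = D.charpoly := by
  have hPQ : P * Q = 1 := mul_eq_one_comm.mp hQP
  have hPC : (P.map (C : ℝ →+* ℝ[X])) * (Q.map C) = 1 := by
    rw [← Matrix.map_mul, hPQ]; simp
  have hQC : (Q.map (C : ℝ →+* ℝ[X])) * (P.map C) = 1 := by
    rw [← Matrix.map_mul, hQP]; simp
  have key : charmatrix A = (P.map C) * charmatrix D * (Q.map C) := by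
    unfold charmatrix
    rw [hA]
    simp only [RingHom.mapMatrix_apply, Matrix.map_mul]
    rw [Matrix.mul_sub, Matrix.sub_mul]
    congr 1
    rw [Matrix.scalar_apply, ← Matrix.smul_one_eq_diagonal, Matrix.mul_smul, mul_one,
      Matrix.smul_mul, hPC]
  rw [Matrix.charpoly, Matrix.charpoly, key, Matrix.det_mul, Matrix.det_mul]
  have : (P.map (C:ℝ→+*ℝ[X])).det * (Q.map C).det = 1 := by
    rw [mul_comm, ← Matrix.det_mul, hQC, Matrix.det_one]
  calc (P.map (C:ℝ→+*ℝ[X])).det * (charmatrix D).det * (Q.map C).det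
      = (charmatrix D).det * ((P.map C).det * (Q.map C).det) := by ring
    _ = D.charpoly := by rw [this, mul_one]; rfl

open Polynomial in
lemma charpoly_diagonal_eq (d : V → ℝ) :
    (Matrix.diagonal d).charpoly = ∏ i, (X - C (d i)) := by
  rw [Matrix.charpoly]
  have : charmatrix (Matrix.diagonal d) = Matrix.diagonal (fun i => X - C (d i)) := by
    ext i j
    by_cases h : i = j
    · subst h; simp [charmatrix_apply_eq]
    · simp [charmatrix_apply_ne _ _ _ h, Matrix.diagonal_apply_ne _ h]
  rw [this, Matrix.det_diagonal]

lemma charpoly_hermitian (A : Matrix V V ℝ) (hA : A.IsHermitian) :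
    A.charpoly = (Matrix.diagonal hA.eigenvalues).charpoly := by
  apply charpoly_eq_of_conj A (hA.eigenvectorUnitary : Matrix V V ℝ)
    (star (hA.eigenvectorUnitary : Matrix V V ℝ))
  · exact (hA.eigenvectorUnitary).prop.1
  · have h := hA.spectral_theorem
    convert h using 2
    rfl

open Polynomial in
lemma sum_comp_eq_of_prod_eq (f g : V → ℝ) (F : ℝ → ℝ)
    (h : ∏ i, (X - C (f i)) = ∏ i, (X - C (g i))) : ∑ i, F (f i) = ∑ i, F (g i) := by
  have hne : ∀ (f : V → ℝ), ∀ i ∈ Finset.univ, (X - C (f i)) ≠ (0 : ℝ[X]) :=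
    fun f i _ => X_sub_C_ne_zero (f i)
  have hr : ∀ (f : V → ℝ), (∏ i, (X - C (f i))).roots = Finset.univ.val.map f := by
    intro f
    rw [Polynomial.roots_prod _ _ (Finset.prod_ne_zero_iff.mpr (hne f))]
    simp [Polynomial.roots_X_sub_C, Multiset.bind_singleton]
  have hmult : Finset.univ.val.map f = Finset.univ.val.map g := by
    rw [← hr f, ← hr g, h]
  calc ∑ i, F (f i) = ((Finset.univ.val.map f).map F).sum := by
        rw [Multiset.map_map]; rfl
    _ = ((Finset.univ.val.map g).map F).sum := by rw [hmult]
    _ = ∑ i, F (g i) := by rw [Multiset.map_map]; rfl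

lemma vnEntropy_eq_sum (G : SimpleGraph V) (Lm P Q : Matrix V V ℝ) (Dv : V → ℝ)
    (hlap : ∀ (_ : DecidableRel G.Adj), G.lapMatrix ℝ = Lm)
    (hQP : Q * P = 1)
    (hLP : Lm * P = P * Matrix.diagonal Dv) :
    vnEntropy G = ∑ v, -((Lm.trace)⁻¹ * Dv v * Real.logb 2 ((Lm.trace)⁻¹ * Dv v)) := by
  classical
  set t := Lm.trace with ht
  have hL : (letI := Classical.decRel G.Adj; G.lapMatrix ℝ) = Lm := hlap _
  have hrho : rho G = t⁻¹ • Lm := by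
    unfold rho
    rw [hL]
  have hPQ : P * Q = 1 := mul_eq_one_comm.mp hQP
  have hLPQ : Lm = P * Matrix.diagonal Dv * Q := by
    calc Lm = Lm * (P * Q) := by rw [hPQ, mul_one]
    _ = (Lm * P) * Q := by rw [mul_assoc]
    _ = P * Matrix.diagonal Dv * Q := by rw [hLP]
  have hconj : rho G = P * Matrix.diagonal (fun v => t⁻¹ * Dv v) * Q := by
    rw [hrho, hLPQ]
    rw [show (fun v => t⁻¹ * Dv v) = t⁻¹ • Dv from rfl, Matrix.diagonal_smul,
      Matrix.mul_smul, Matrix.smul_mul]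
  have hcp1 : (rho G).charpoly = ∏ v, (Polynomial.X - Polynomial.C (t⁻¹ * Dv v)) := by
    rw [charpoly_eq_of_conj (rho G) P Q _ hQP hconj, charpoly_diagonal_eq]
  have hcp2 : (rho G).charpoly = ∏ v, (Polynomial.X - Polynomial.C (eigs G v)) := by
    rw [charpoly_hermitian (rho G) (rho_isHermitian G), charpoly_diagonal_eq]; rfl
  exact sum_comp_eq_of_prod_eq _ _ (fun x => -(x * Real.logb 2 x)) (hcp2 ▸ hcp1)

abbrev Vtx (m : ℕ) := Fin 2 ⊕ Fin m

def Pm (m : ℕ) : Matrix (Vtx m) (Vtx m) ℝ := fun v k =>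
  match v, k with
  | Sum.inl _, Sum.inl l => if l = 0 then 1 else (m : ℝ)
  | Sum.inr _, Sum.inl l => if l = 0 then 1 else -2
  | Sum.inl i, Sum.inr k => if k.val = 0 then (if i = 0 then 1 else -1) else 0
  | Sum.inr j, Sum.inr k => if k.val = 0 then 0 else ((if j = k then (1:ℝ) else 0) - (if j.val = 0 then 1 else 0))

noncomputable def Qm (m : ℕ) : Matrix (Vtx m) (Vtx m) ℝ := fun k v =>
  match k, v with
  | Sum.inl l, Sum.inl _ => if l = 0 then 1/(m+2) else 1/(2*(m+2))
  | Sum.inl l, Sum.inr _ => if l = 0 then 1/(m+2) else -(1/(m*(m+2)))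
  | Sum.inr k, Sum.inl i => if k.val = 0 then (if i = 0 then 1/2 else -1/2) else 0
  | Sum.inr k, Sum.inr j => if k.val = 0 then 0 else ((if j = k then (1:ℝ) else 0) - 1/m)

def L1m (m : ℕ) : Matrix (Vtx m) (Vtx m) ℝ := fun u v =>
  match u, v with
  | Sum.inl i, Sum.inl i' => if i = i' then (m:ℝ) else 0
  | Sum.inl _, Sum.inr _ => -1
  | Sum.inr _, Sum.inl _ => -1
  | Sum.inr j, Sum.inr j' => if j = j' then 2 else 0

def L2m (m : ℕ) : Matrix (Vtx m) (Vtx m) ℝ := fun u v =>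
  match u, v with
  | Sum.inl i, Sum.inl i' => if i = i' then (m:ℝ)+1 else -1
  | Sum.inl _, Sum.inr _ => -1
  | Sum.inr _, Sum.inl _ => -1
  | Sum.inr j, Sum.inr j' => if j = j' then 2 else 0

def D1v (m : ℕ) : Vtx m → ℝ :=
  Sum.elim (fun i => if i = 0 then 0 else (m:ℝ)+2) (fun k => if k.val = 0 then (m:ℝ) else 2)

def D2v (m : ℕ) : Vtx m → ℝ :=
  Sum.elim (fun i => if i = 0 then 0 else (m:ℝ)+2) (fun k => if k.val = 0 then (m:ℝ)+2 else 2)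

lemma QP (m : ℕ) (hm : 3 ≤ m) : Qm m * Pm m = 1 := by
  have hm0 : (m : ℝ) ≠ 0 := by
    have : (0:ℝ) < m := by exact_mod_cast (by omega : 0 < m)
    linarith
  have hm2 : (m : ℝ) + 2 ≠ 0 := by positivity
  have hcard : (Finset.univ : Finset (Fin m)).card = m := by simp
  have hiff : ∀ x : Fin m, ((x:ℕ) = 0) = (x = (⟨0, by omega⟩ : Fin m)) := by
    intro x; simp [Fin.ext_iff]
  ext a b
  rw [Matrix.mul_apply, Fintype.sum_sum_type, Fin.sum_univ_two]
  rcases a with l | k <;> rcases b with l' | k'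
  · fin_cases l <;> fin_cases l' <;>
      simp only [Pm, Qm, Matrix.one_apply, if_true, if_false, reduceIte] <;>
      simp [hiff, mul_sub, sub_mul, mul_ite, ite_mul, Finset.sum_sub_distrib,
        Finset.sum_ite_eq, Finset.sum_ite_eq', hcard] <;>
      field_simp <;> ring
  · fin_cases l <;>
      simp only [Pm, Qm, Matrix.one_apply, reduceIte] <;>
      by_cases h : (k' : ℕ) = 0 <;>
      simp [h, hiff, mul_sub, sub_mul, mul_ite, ite_mul, Finset.sum_sub_distrib,
        Finset.sum_ite_eq, Finset.sum_ite_eq', hcard] <;>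
      field_simp <;> ring
  · fin_cases l' <;>
      simp only [Pm, Qm, Matrix.one_apply, reduceIte] <;>
      by_cases h : (k : ℕ) = 0 <;>
      simp [h, hiff, mul_sub, sub_mul, mul_ite, ite_mul, Finset.sum_sub_distrib,
        Finset.sum_ite_eq, Finset.sum_ite_eq', hcard] <;>
      field_simp <;> ring
  · simp only [Pm, Qm, Matrix.one_apply, reduceIte]
    by_cases h : (k : ℕ) = 0 <;> by_cases h' : (k' : ℕ) = 0
    · have e : k = k' := Fin.ext (by omega)
      subst e
      simp [h, hiff, mul_sub, sub_mul, mul_ite, ite_mul, Finset.sum_sub_distrib,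
        Finset.sum_ite_eq, Finset.sum_ite_eq', hcard, Sum.inr.injEq]
      norm_num
    · have e : ¬ k = k' := fun e => h' (by rw [← e]; exact h)
      simp [h, h', e, hiff, mul_sub, sub_mul, mul_ite, ite_mul, Finset.sum_sub_distrib,
        Finset.sum_ite_eq, Finset.sum_ite_eq', hcard, Sum.inr.injEq]
    · have e : ¬ k = k' := fun e => h (by rw [e]; exact h')
      simp [h, h', e, hiff, mul_sub, sub_mul, mul_ite, ite_mul, Finset.sum_sub_distrib,
        Finset.sum_ite_eq, Finset.sum_ite_eq', hcard, Sum.inr.injEq]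
    · have hzk : ¬ ((⟨0, by omega⟩ : Fin m) = k) :=
        fun e => h (by have := congrArg Fin.val e; simpa using this.symm)
      have hzk' : ¬ ((⟨0, by omega⟩ : Fin m) = k') :=
        fun e => h' (by have := congrArg Fin.val e; simpa using this.symm)
      have hkz : ¬ (k = (⟨0, by omega⟩ : Fin m)) := fun e => hzk e.symm
      have hkz' : ¬ (k' = (⟨0, by omega⟩ : Fin m)) := fun e => hzk' e.symm
      simp [h, h', hzk, hzk', hkz, hkz', hiff, mul_sub, sub_mul, mul_ite, ite_mul,
        Finset.sum_sub_distrib, Finset.sum_ite_eq, Finset.sum_ite_eq', hcard, Sum.inr.injEq]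
      by_cases e : k = k'
      · simp [e]
      · have e2 : ¬ k' = k := fun x => e x.symm
        simp [e, e2]

lemma LP1 (m : ℕ) (hm : 3 ≤ m) : L1m m * Pm m = Pm m * Matrix.diagonal (D1v m) := by
  have hcard : (Finset.univ : Finset (Fin m)).card = m := by simp
  have hiff : ∀ x : Fin m, ((x:ℕ) = 0) = (x = (⟨0, by omega⟩ : Fin m)) := by
    intro x; simp [Fin.ext_iff]
  ext a b
  rw [Matrix.mul_apply, Matrix.mul_apply, Fintype.sum_sum_type, Fintype.sum_sum_type,
    Fin.sum_univ_two, Fin.sum_univ_two]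
  rcases a with l | k <;> rcases b with l' | k'
  · fin_cases l <;> fin_cases l' <;>
      simp [Pm, L1m, D1v, Matrix.diagonal_apply, hiff, mul_sub, sub_mul, mul_ite, ite_mul,
        Finset.sum_sub_distrib, Finset.sum_ite_eq, Finset.sum_ite_eq', hcard] <;> ring
  · fin_cases l <;>
      by_cases h : (k' : ℕ) = 0 <;> rw [hiff] at h <;>
      simp [Pm, L1m, D1v, Matrix.diagonal_apply, h, hiff, mul_sub, sub_mul, mul_ite, ite_mul,
        Finset.sum_sub_distrib, Finset.sum_ite_eq, Finset.sum_ite_eq', hcard]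
  · fin_cases l' <;>
      simp [Pm, L1m, D1v, Matrix.diagonal_apply, hiff, mul_sub, sub_mul, mul_ite, ite_mul,
        Finset.sum_sub_distrib, Finset.sum_ite_eq, Finset.sum_ite_eq', hcard] <;> ring
  · by_cases h : (k' : ℕ) = 0 <;> by_cases h2 : (k : ℕ) = 0 <;>
      rw [hiff] at h h2 <;>
      simp [Pm, L1m, D1v, Matrix.diagonal_apply, h, h2, hiff, mul_sub, sub_mul, mul_ite, ite_mul,
        Finset.sum_sub_distrib, Finset.sum_ite_eq, Finset.sum_ite_eq', hcard] <;>
      split_ifs <;> simp_all [Fin.ext_iff] <;> ring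

lemma LP2 (m : ℕ) (hm : 3 ≤ m) : L2m m * Pm m = Pm m * Matrix.diagonal (D2v m) := by
  have hcard : (Finset.univ : Finset (Fin m)).card = m := by simp
  have hiff : ∀ x : Fin m, ((x:ℕ) = 0) = (x = (⟨0, by omega⟩ : Fin m)) := by
    intro x; simp [Fin.ext_iff]
  ext a b
  rw [Matrix.mul_apply, Matrix.mul_apply, Fintype.sum_sum_type, Fintype.sum_sum_type,
    Fin.sum_univ_two, Fin.sum_univ_two]
  rcases a with l | k <;> rcases b with l' | k'
  · fin_cases l <;> fin_cases l' <;>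
      simp [Pm, L2m, D2v, Matrix.diagonal_apply, hiff, mul_sub, sub_mul, mul_ite, ite_mul,
        Finset.sum_sub_distrib, Finset.sum_ite_eq, Finset.sum_ite_eq', hcard] <;> ring
  · fin_cases l <;>
      by_cases h : (k' : ℕ) = 0 <;> rw [hiff] at h <;>
      simp [Pm, L2m, D2v, Matrix.diagonal_apply, h, hiff, mul_sub, sub_mul, mul_ite, ite_mul,
        Finset.sum_sub_distrib, Finset.sum_ite_eq, Finset.sum_ite_eq', hcard] <;> ring
  · fin_cases l' <;>
      simp [Pm, L2m, D2v, Matrix.diagonal_apply, hiff, mul_sub, sub_mul, mul_ite, ite_mul,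
        Finset.sum_sub_distrib, Finset.sum_ite_eq, Finset.sum_ite_eq', hcard] <;> ring
  · by_cases h : (k' : ℕ) = 0 <;> by_cases h2 : (k : ℕ) = 0 <;>
      rw [hiff] at h h2 <;>
      simp [Pm, L2m, D2v, Matrix.diagonal_apply, h, h2, hiff, mul_sub, sub_mul, mul_ite, ite_mul,
        Finset.sum_sub_distrib, Finset.sum_ite_eq, Finset.sum_ite_eq', hcard] <;>
      split_ifs <;> simp_all [Fin.ext_iff] <;> ring

lemma lap1 (m : ℕ) (inst : DecidableRel (completeBipartiteGraph (Fin 2) (Fin m)).Adj) :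
    (completeBipartiteGraph (Fin 2) (Fin m)).lapMatrix ℝ = L1m m := by
  ext a b
  rw [SimpleGraph.lapMatrix, Matrix.sub_apply, SimpleGraph.degMatrix, Matrix.diagonal_apply]
  rcases a with i | j <;> rcases b with i' | j'
  · by_cases h : i = i'
    · subst h
      rw [if_pos rfl, SimpleGraph.degree_eq_sum_if_adj, Fintype.sum_sum_type]
      simp [L1m]
    · simp [L1m, h, Sum.inl.injEq]
  · simp [L1m]
  · simp [L1m]
  · by_cases h : j = j'
    · subst h
      rw [if_pos rfl, SimpleGraph.degree_eq_sum_if_adj, Fintype.sum_sum_type]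
      simp [L1m, Fin.sum_univ_two]
    · simp [L1m, h, Sum.inr.injEq]

noncomputable def G2 (m : ℕ) : SimpleGraph (Vtx m) :=
  completeBipartiteGraph (Fin 2) (Fin m) ⊔
    SimpleGraph.fromEdgeSet {s((Sum.inl 0 : Vtx m), Sum.inl 1)}

lemma G2_adj (m : ℕ) (a b : Vtx m) :
    (G2 m).Adj a b ↔ ((∃ i j, a = Sum.inl i ∧ b = Sum.inr j) ∨ (∃ i j, a = Sum.inr j ∧ b = Sum.inl i)
      ∨ (∃ i i', a = Sum.inl i ∧ b = Sum.inl i' ∧ i ≠ i')) := by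
  rcases a with i | j <;> rcases b with i' | j' <;>
    simp [G2, SimpleGraph.fromEdgeSet_adj, Sym2.eq_iff]
  · intro h
    fin_cases i <;> fin_cases i' <;> simp_all

lemma lap2 (m : ℕ) (inst : DecidableRel (G2 m).Adj) :
    (G2 m).lapMatrix ℝ = L2m m := by
  ext a b
  rw [SimpleGraph.lapMatrix, Matrix.sub_apply, SimpleGraph.degMatrix, Matrix.diagonal_apply]
  rcases a with i | j <;> rcases b with i' | j'
  · by_cases h : i = i'
    · subst h
      rw [if_pos rfl, SimpleGraph.degree_eq_sum_if_adj, Fintype.sum_sum_type]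
      have h1 : ∀ i' : Fin 2, (if (G2 m).Adj (Sum.inl i) (Sum.inl i') then (1:ℝ) else 0)
          = if i = i' then 0 else 1 := by
        intro i'
        by_cases hii : i = i'
        · simp [hii, G2_adj]
        · have hadj : (G2 m).Adj (Sum.inl i) (Sum.inl i') := by simp [G2_adj, hii]
          simp [hadj, hii]
      simp only [h1]
      have h2 : ∀ j' : Fin m, (if (G2 m).Adj (Sum.inl i) (Sum.inr j') then (1:ℝ) else 0) = 1 := by
        intro j'; rw [if_pos]; simp [G2_adj]
      simp only [h2]
      have : ¬ (G2 m).Adj (Sum.inl i) (Sum.inl i) := SimpleGraph.irrefl _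
      fin_cases i <;> simp_all [L2m, Fin.sum_univ_two] <;> ring
    · have hadj : (G2 m).Adj (Sum.inl i) (Sum.inl i') := by simp [G2_adj, h]
      simp [L2m, h, Sum.inl.injEq, hadj]
  · have hadj : (G2 m).Adj (Sum.inl i) (Sum.inr j') := by simp [G2_adj]
    simp [L2m, hadj]
  · have hadj : (G2 m).Adj (Sum.inr j) (Sum.inl i') := by simp [G2_adj]
    simp [L2m, hadj]
  · by_cases h : j = j'
    · subst h
      rw [if_pos rfl, SimpleGraph.degree_eq_sum_if_adj, Fintype.sum_sum_type]
      have h1 : ∀ i' : Fin 2, (if (G2 m).Adj (Sum.inr j) (Sum.inl i') then (1:ℝ) else 0) = 1 := by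
        intro i'; rw [if_pos]; simp [G2_adj]
      have h2 : ∀ j' : Fin m, (if (G2 m).Adj (Sum.inr j) (Sum.inr j') then (1:ℝ) else 0) = 0 := by
        intro j'; rw [if_neg]; simp [G2_adj]
      simp only [h1, h2]
      have : ¬ (G2 m).Adj (Sum.inr j) (Sum.inr j) := SimpleGraph.irrefl _
      simp_all [L2m, Fin.sum_univ_two]
    · have hadj : ¬ (G2 m).Adj (Sum.inr j) (Sum.inr j') := by simp [G2_adj]
      simp [L2m, h, Sum.inr.injEq, hadj]

lemma trace_L1' (m : ℕ) : (L1m m).trace = 4*(m:ℝ) := by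
  rw [Matrix.trace, Fintype.sum_sum_type]
  simp [Matrix.diag, L1m, Fin.sum_univ_two, Finset.sum_const, Finset.card_univ]
  ring

lemma trace_L2' (m : ℕ) : (L2m m).trace = 4*(m:ℝ) + 2 := by
  rw [Matrix.trace, Fintype.sum_sum_type]
  simp [Matrix.diag, L2m, Fin.sum_univ_two, Finset.sum_const, Finset.card_univ]
  ring

lemma sum_if_val_zero (m : ℕ) (hm : 3 ≤ m) (a b : ℝ) :
    ∑ j : Fin m, (if (j:ℕ) = 0 then a else b) = a + ((m:ℝ)-1)*b := by
  have hz : (⟨0, by omega⟩ : Fin m) ∈ Finset.univ := Finset.mem_univ _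
  rw [← Finset.add_sum_erase _ _ hz]
  have h1 : ∀ j ∈ Finset.univ.erase (⟨0, by omega⟩ : Fin m),
      (if (j:ℕ) = 0 then a else b) = b := by
    intro j hj
    rw [if_neg]
    intro hj0
    exact (Finset.mem_erase.mp hj).1 (Fin.ext hj0)
  rw [Finset.sum_congr rfl h1, Finset.sum_const, Finset.card_erase_of_mem hz,
    Finset.card_univ, Fintype.card_fin]
  simp only [if_pos rfl, nsmul_eq_mul]
  have : ((m - 1 : ℕ) : ℝ) = (m:ℝ) - 1 := by
    have : (1:ℕ) ≤ m := by omega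
    push_cast [Nat.cast_sub this]; ring
  rw [this]
  norm_num

/-- evaluation of the entropy sum for graph 1 -/
lemma sum_eval1 (m : ℕ) (hm : 3 ≤ m) (F : ℝ → ℝ) (hF0 : F 0 = 0) (c : ℝ) :
    ∑ v : Vtx m, F (c * D1v m v)
      = F (c * ((m:ℝ)+2)) + (F (c * (m:ℝ)) + ((m:ℝ)-1) * F (c * 2)) := by
  rw [Fintype.sum_sum_type, Fin.sum_univ_two]
  have e1 : ∀ j : Fin m, F (c * D1v m (Sum.inr j)) = if (j:ℕ) = 0 then F (c*(m:ℝ)) else F (c*2) := by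
    intro j
    by_cases h : (j:ℕ) = 0 <;> simp [D1v, h]
  rw [Finset.sum_congr rfl (fun j _ => e1 j), sum_if_val_zero m hm]
  simp [D1v, hF0]

lemma sum_eval2 (m : ℕ) (hm : 3 ≤ m) (F : ℝ → ℝ) (hF0 : F 0 = 0) (c : ℝ) :
    ∑ v : Vtx m, F (c * D2v m v)
      = F (c * ((m:ℝ)+2)) + (F (c * ((m:ℝ)+2)) + ((m:ℝ)-1) * F (c * 2)) := by
  rw [Fintype.sum_sum_type, Fin.sum_univ_two]
  have e1 : ∀ j : Fin m, F (c * D2v m (Sum.inr j))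
      = if (j:ℕ) = 0 then F (c*((m:ℝ)+2)) else F (c*2) := by
    intro j
    by_cases h : (j:ℕ) = 0 <;> simp [D2v, h]
  rw [Finset.sum_congr rfl (fun j _ => e1 j), sum_if_val_zero m hm]
  simp [D2v, hF0]

lemma log_53 : Real.log (5/3) ≥ 0.51 := by
  have h := Real.abs_log_sub_add_sum_range_le (x := 2/5) (by rw [abs_of_pos] <;> norm_num) 8
  rw [abs_le] at h
  have h1 := h.2
  have hlog : Real.log (5/3) = -Real.log (1 - 2/5) := by
    rw [show (1:ℝ) - 2/5 = (5/3)⁻¹ by norm_num, Real.log_inv]; ring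
  rw [hlog]
  rw [Finset.sum_range_succ, Finset.sum_range_succ, Finset.sum_range_succ,
    Finset.sum_range_succ, Finset.sum_range_succ, Finset.sum_range_succ,
    Finset.sum_range_succ, Finset.sum_range_succ, Finset.sum_range_zero] at h1
  rw [abs_of_pos (by norm_num : (0:ℝ) < 2/5)] at h1
  norm_num at h1 ⊢
  linarith

lemma log_32 : Real.log (3/2) ≥ 0.4 := by
  have h := Real.abs_log_sub_add_sum_range_le (x := 1/3) (by rw [abs_of_pos] <;> norm_num) 5
  rw [abs_le] at h
  have h1 := h.2
  have hlog : Real.log (3/2) = -Real.log (1 - 1/3) := by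
    rw [show (1:ℝ) - 1/3 = (3/2)⁻¹ by norm_num, Real.log_inv]; ring
  rw [hlog]
  rw [Finset.sum_range_succ, Finset.sum_range_succ, Finset.sum_range_succ,
    Finset.sum_range_succ, Finset.sum_range_succ, Finset.sum_range_zero] at h1
  rw [abs_of_pos (by norm_num : (0:ℝ) < 1/3)] at h1
  norm_num at h1 ⊢
  linarith

lemma log_76 : Real.log (7/6) ≤ 0.1546 := by
  have h := Real.abs_log_sub_add_sum_range_le (x := 1/7) (by rw [abs_of_pos] <;> norm_num) 3
  rw [abs_le] at h
  have h2 := h.1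
  have hlog : Real.log (7/6) = -Real.log (1 - 1/7) := by
    rw [show (1:ℝ) - 1/7 = (7/6)⁻¹ by norm_num, Real.log_inv]; ring
  rw [hlog]
  rw [Finset.sum_range_succ, Finset.sum_range_succ, Finset.sum_range_succ,
    Finset.sum_range_zero] at h2
  rw [abs_of_pos (by norm_num : (0:ℝ) < 1/7)] at h2
  norm_num at h2 ⊢
  linarith

lemma log_3_gt_1 : Real.log 3 > 1 := by
  have h : Real.log 3 = Real.log 2 + Real.log (3/2) := by
    rw [← Real.log_mul (by norm_num) (by norm_num)]; norm_num
  have := Real.log_two_gt_d9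
  have := log_32
  rw [h]; linarith

lemma key_ineq (M : ℝ) (hM : M = 3 ∨ 4 ≤ M) :
    2 * -((4*M+2)⁻¹*(M+2) * Real.log ((4*M+2)⁻¹*(M+2)))
      + (M-1) * -((4*M+2)⁻¹*2 * Real.log ((4*M+2)⁻¹*2))
    < -((4*M)⁻¹*(M+2) * Real.log ((4*M)⁻¹*(M+2)))
      + -((4*M)⁻¹*M * Real.log ((4*M)⁻¹*M))
      + (M-1) * -((4*M)⁻¹*2 * Real.log ((4*M)⁻¹*2)) := by
  have hM3 : (3:ℝ) ≤ M := by rcases hM with h | h <;> linarith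
  have h0 : (0:ℝ) < M := by linarith
  have hlog4 : Real.log 4 = 2 * Real.log 2 := by
    rw [show (4:ℝ) = 2^2 by norm_num, Real.log_pow]; push_cast; ring
  have hlog4M : Real.log (4*M) = 2 * Real.log 2 + Real.log M := by
    rw [Real.log_mul (by norm_num) (by positivity), hlog4]
  have hlog2M : Real.log (2*M) = Real.log 2 + Real.log M :=
    Real.log_mul (by norm_num) (by positivity)
  have hlog4M2 : Real.log (4*M+2) = Real.log 2 + Real.log (2*M+1) := by
    rw [show (4:ℝ)*M+2 = 2*(2*M+1) by ring, Real.log_mul (by norm_num) (by positivity)]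
  have t1 : Real.log ((4*M)⁻¹*(M+2)) = Real.log (M+2) - (2*Real.log 2 + Real.log M) := by
    rw [Real.log_mul (by positivity) (by positivity), Real.log_inv, hlog4M]; ring
  have t2 : Real.log ((4*M)⁻¹*M) = -(2*Real.log 2) := by
    rw [show (4*M)⁻¹*M = 4⁻¹ by field_simp, Real.log_inv, hlog4]
  have t3 : Real.log ((4*M)⁻¹*2) = -(Real.log 2 + Real.log M) := by
    rw [show (4*M)⁻¹*2 = (2*M)⁻¹ by field_simp; ring, Real.log_inv, hlog2M]
  have t4 : Real.log ((4*M+2)⁻¹*(M+2)) = Real.log (M+2) - (Real.log 2 + Real.log (2*M+1)) := by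
    rw [Real.log_mul (by positivity) (by positivity), Real.log_inv, hlog4M2]; ring
  have t5 : Real.log ((4*M+2)⁻¹*2) = -(Real.log (2*M+1)) := by
    rw [show (4*M+2)⁻¹*2 = (2*M+1)⁻¹ by field_simp; ring, Real.log_inv]
  rw [t1, t2, t3, t4, t5]
  set c := Real.log 2 with hc
  set LM := Real.log M with hLM
  set A := Real.log (M+2) with hA
  set B := Real.log (2*M+1) with hB
  have key : (-( (4*M)⁻¹*(M+2) * (A - (2*c + LM))) + -((4*M)⁻¹*M * -(2*c))
      + (M-1) * -((4*M)⁻¹*2 * -(c + LM)))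
      - (2 * -((4*M+2)⁻¹*(M+2) * (A - (c + B))) + (M-1) * -((4*M+2)⁻¹*2 * -B))
      = (1/(4*M*(4*M+2))) * ((4*M^2+2*M)*(A-LM) + (4*M-4)*(A-c) - (16*M^2+8*M)*(B-c-LM)) := by
    field_simp
    ring
  have hNum : (4*M^2+2*M)*(A-LM) + (4*M-4)*(A-c) - (16*M^2+8*M)*(B-c-LM) > 0 := by
    have hu : (M+2) * (A - LM) ≥ 2 := by
      have hx : (0:ℝ) < (M+2)/M := by positivity
      have h1 := Real.one_sub_inv_le_log_of_pos hx
      have h2 : Real.log ((M+2)/M) = A - LM := Real.log_div (by positivity) (by positivity)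
      have h3 : ((M+2)/M)⁻¹ = M/(M+2) := by rw [inv_div]
      rw [h2, h3] at h1
      have h4 : 1 - M/(M+2) = 2/(M+2) := by field_simp; ring
      rw [h4] at h1
      calc (M+2) * (A - LM) ≥ (M+2) * (2/(M+2)) := by
            apply mul_le_mul_of_nonneg_left h1 (by linarith)
        _ = 2 := by field_simp
    have hw : 2*M*(B - c - LM) ≤ 1 := by
      have hx : (0:ℝ) < (2*M+1)/(2*M) := by positivity
      have h1 := Real.log_le_sub_one_of_pos hx
      have h2 : Real.log ((2*M+1)/(2*M)) = B - (c + LM) := by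
        rw [Real.log_div (by positivity) (by positivity), hlog2M]
      rw [h2] at h1
      have h3 : (2*M+1)/(2*M) - 1 = 1/(2*M) := by field_simp; ring
      rw [h3] at h1
      calc 2*M*(B - c - LM) ≤ 2*M*(1/(2*M)) := by
            apply mul_le_mul_of_nonneg_left (by linarith) (by linarith)
        _ = 1 := by field_simp
    rcases hM with h3 | h4
    · subst h3
      have e5 : Real.log (5:ℝ) - Real.log 3 = Real.log (5/3) :=
        (Real.log_div (by norm_num) (by norm_num)).symm
      have e6 : Real.log (5:ℝ) - Real.log 2 = Real.log (5/2) :=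
        (Real.log_div (by norm_num) (by norm_num)).symm
      have e7 : Real.log ((5:ℝ)/2) = Real.log (5/3) + Real.log (3/2) := by
        rw [← Real.log_mul (by norm_num) (by norm_num)]; norm_num
      have e8 : Real.log ((7:ℝ)/6) = Real.log 7 - (Real.log 2 + Real.log 3) := by
        rw [show Real.log ((7:ℝ)/6) = Real.log 7 - Real.log 6 from
          Real.log_div (by norm_num) (by norm_num),
          show Real.log (6:ℝ) = Real.log 2 + Real.log 3 by
            rw [← Real.log_mul (by norm_num) (by norm_num)]; norm_num]
      rw [hA, hLM, hB, hc]
      norm_num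
      linarith [log_53, log_32, log_76, e5, e6, e7, e8]
    · -- M ≥ 4
      have hv : A - c > 1 := by
        have h1 : Real.log 3 ≤ Real.log ((M+2)/2) := by
          apply Real.log_le_log (by norm_num)
          linarith [h4]
        have h2 : Real.log ((M+2)/2) = A - c := Real.log_div (by positivity) (by norm_num)
        have := log_3_gt_1
        linarith
      have p1 : (0:ℝ) ≤ 4*M^2+2*M := by nlinarith [sq_nonneg M]
      have p2 : (0:ℝ) < (4*M-4)*(M+2) := mul_pos (by linarith) (by linarith)
      have p3 : (0:ℝ) ≤ (8*M+4)*(M+2) := le_of_lt (mul_pos (by linarith) (by linarith))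
      have hA1 : (4*M^2+2*M)*((M+2)*(A-LM)) ≥ (4*M^2+2*M)*2 :=
        mul_le_mul_of_nonneg_left hu p1
      have hB1 : ((4*M-4)*(M+2))*1 < ((4*M-4)*(M+2))*(A-c) :=
        (mul_lt_mul_iff_right₀ p2).mpr hv
      have hC1 : ((8*M+4)*(M+2))*(2*M*(B-c-LM)) ≤ ((8*M+4)*(M+2))*1 :=
        mul_le_mul_of_nonneg_left hw p3
      have hD : (M-4)*(4*M+4) ≥ 0 := mul_nonneg (by linarith) (by linarith)
      have hstep : (M+2) * ((4*M^2+2*M)*(A-LM) + (4*M-4)*(A-c) - (16*M^2+8*M)*(B-c-LM)) > 0 := by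
        nlinarith [hA1, hB1, hC1, hD]
      nlinarith [hstep, h0]
  have hpos : (0:ℝ) < 1/(4*M*(4*M+2)) := by positivity
  linarith [key, mul_pos hpos hNum]


lemma sum_eval1' (m : ℕ) (hm : 3 ≤ m) (c : ℝ) :
    ∑ v : Vtx m, -(c * D1v m v * Real.logb 2 (c * D1v m v))
      = -(c * ((m:ℝ)+2) * Real.logb 2 (c * ((m:ℝ)+2)))
        + (-(c * (m:ℝ) * Real.logb 2 (c * (m:ℝ)))
          + ((m:ℝ)-1) * -(c * 2 * Real.logb 2 (c * 2))) :=
  sum_eval1 m hm (fun x => -(x * Real.logb 2 x)) (by norm_num) c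

lemma sum_eval2' (m : ℕ) (hm : 3 ≤ m) (c : ℝ) :
    ∑ v : Vtx m, -(c * D2v m v * Real.logb 2 (c * D2v m v))
      = -(c * ((m:ℝ)+2) * Real.logb 2 (c * ((m:ℝ)+2)))
        + (-(c * ((m:ℝ)+2) * Real.logb 2 (c * ((m:ℝ)+2)))
          + ((m:ℝ)-1) * -(c * 2 * Real.logb 2 (c * 2))) :=
  sum_eval2 m hm (fun x => -(x * Real.logb 2 x)) (by norm_num) c

lemma key_ineq_logb (M : ℝ) (hM : M = 3 ∨ 4 ≤ M) :
    -((4*M+2)⁻¹*(M+2) * Real.logb 2 ((4*M+2)⁻¹*(M+2)))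
      + (-((4*M+2)⁻¹*(M+2) * Real.logb 2 ((4*M+2)⁻¹*(M+2)))
        + (M-1) * -((4*M+2)⁻¹*2 * Real.logb 2 ((4*M+2)⁻¹*2)))
    < -((4*M)⁻¹*(M+2) * Real.logb 2 ((4*M)⁻¹*(M+2)))
      + (-((4*M)⁻¹*M * Real.logb 2 ((4*M)⁻¹*M))
        + (M-1) * -((4*M)⁻¹*2 * Real.logb 2 ((4*M)⁻¹*2))) := by
  have hk := key_ineq M hM
  have hlog2 : (0:ℝ) < Real.log 2 := Real.log_pos (by norm_num)
  calc -((4*M+2)⁻¹*(M+2) * Real.logb 2 ((4*M+2)⁻¹*(M+2)))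
      + (-((4*M+2)⁻¹*(M+2) * Real.logb 2 ((4*M+2)⁻¹*(M+2)))
        + (M-1) * -((4*M+2)⁻¹*2 * Real.logb 2 ((4*M+2)⁻¹*2)))
      = (2 * -((4*M+2)⁻¹*(M+2) * Real.log ((4*M+2)⁻¹*(M+2)))
        + (M-1) * -((4*M+2)⁻¹*2 * Real.log ((4*M+2)⁻¹*2))) / Real.log 2 := by
        simp only [Real.logb]; ring
    _ < (-((4*M)⁻¹*(M+2) * Real.log ((4*M)⁻¹*(M+2)))
        + -((4*M)⁻¹*M * Real.log ((4*M)⁻¹*M))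
        + (M-1) * -((4*M)⁻¹*2 * Real.log ((4*M)⁻¹*2))) / Real.log 2 :=
        (div_lt_div_iff_of_pos_right hlog2).mpr hk
    _ = -((4*M)⁻¹*(M+2) * Real.logb 2 ((4*M)⁻¹*(M+2)))
      + (-((4*M)⁻¹*M * Real.logb 2 ((4*M)⁻¹*M))
        + (M-1) * -((4*M)⁻¹*2 * Real.logb 2 ((4*M)⁻¹*2))) := by
        simp only [Real.logb]; ring


theorem vnEntropy_add_edge_lt {n : ℕ} (hn : 5 ≤ n) :
    vnEntropy (completeBipartiteGraph (Fin 2) (Fin (n - 2)) ⊔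
        SimpleGraph.fromEdgeSet {s((Sum.inl 0 : Fin 2 ⊕ Fin (n - 2)), Sum.inl 1)}) < vnEntropy (completeBipartiteGraph (Fin 2) (Fin (n - 2))) := by
  have hm : 3 ≤ n - 2 := by omega
  set m := n - 2 with hmdef
  have hMcase : ((m:ℝ) = 3 ∨ 4 ≤ (m:ℝ)) := by
    rcases Nat.lt_or_ge m 4 with h | h
    · left
      have : m = 3 := by omega
      rw [this]; norm_num
    · right; exact_mod_cast h
  show vnEntropy (G2 m) < vnEntropy (completeBipartiteGraph (Fin 2) (Fin m))
  have h1 := vnEntropy_eq_sum (completeBipartiteGraph (Fin 2) (Fin m)) (L1m m) (Pm m) (Qm m)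
    (D1v m) (fun inst => lap1 m inst) (QP m hm) (LP1 m hm)
  have h2 := vnEntropy_eq_sum (G2 m) (L2m m) (Pm m) (Qm m)
    (D2v m) (fun inst => lap2 m inst) (QP m hm) (LP2 m hm)
  rw [h1, h2]
  simp only [trace_L1', trace_L2']
  rw [sum_eval1' m hm ((4*(m:ℝ))⁻¹), sum_eval2' m hm ((4*(m:ℝ)+2)⁻¹)]
  exact key_ineq_logb (m:ℝ) hMcase

end VNE
end

section
/- For every integer n ≥ 6, the Rényi 2-entropy of the path P_n is at least the von Neumann entropy of the star on n vertices: H₂(P_n) = log₂((2n−2)²/(6n−8)) ≥ log₂(2n−2) − (n/(2n−2))·log₂ n = S(K_{1,n−1}). -/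
open Matrix Real Finset

namespace VNE

variable {V : Type*} [Fintype V] [DecidableEq V]

/-! ### Auxiliary lemmas -/

section Aux

set_option linter.unusedSectionVars false

lemma deg_eq (G : SimpleGraph V) [h : DecidableRel G.Adj] (v : V) :
    deg G v = (G.degree v : ℝ) := by
  unfold deg
  congr!

lemma rho_eq (G : SimpleGraph V) [h : DecidableRel G.Adj] :
    rho G = ((G.lapMatrix ℝ).trace)⁻¹ • G.lapMatrix ℝ := by
  unfold rho
  congr!

lemma trace_lap (G : SimpleGraph V) [DecidableRel G.Adj] :
    (G.lapMatrix ℝ).trace = ∑ v, (G.degree v : ℝ) := by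
  simp [Matrix.trace, Matrix.diag, SimpleGraph.lapMatrix, SimpleGraph.degMatrix]

lemma lap_apply (G : SimpleGraph V) [DecidableRel G.Adj] (v w : V) :
    G.lapMatrix ℝ v w = if v = w then (G.degree v : ℝ) else if G.Adj v w then -1 else 0 := by
  simp only [SimpleGraph.lapMatrix, Matrix.sub_apply, SimpleGraph.degMatrix,
    Matrix.diagonal_apply, SimpleGraph.adjMatrix_apply]
  split_ifs with h h' <;> simp_all

lemma sum_adj (G : SimpleGraph V) [DecidableRel G.Adj] (v : V) :
    ∑ w, (if G.Adj v w then (1:ℝ) else 0) = G.degree v := by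
  rw [Finset.sum_boole, SimpleGraph.degree, SimpleGraph.neighborFinset_eq_filter]

lemma trace_lap_sq (G : SimpleGraph V) [DecidableRel G.Adj] :
    (G.lapMatrix ℝ * G.lapMatrix ℝ).trace
      = ∑ v, ((G.degree v : ℝ))^2 + ∑ v, (G.degree v : ℝ) := by
  simp only [Matrix.trace, Matrix.diag, Matrix.mul_apply]
  rw [← Finset.sum_add_distrib]
  refine Finset.sum_congr rfl fun v _ => ?_
  have : ∀ w, G.lapMatrix ℝ v w * G.lapMatrix ℝ w v
      = (if v = w then ((G.degree v : ℝ))^2 else 0) + (if G.Adj v w then 1 else 0) := by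
    intro w
    rw [lap_apply, lap_apply]
    by_cases h : v = w
    · subst h; simp [G.irrefl, pow_two]
    · have h' : ¬ w = v := fun hh => h hh.symm
      simp only [h, h', if_false, if_neg h', zero_add]
      by_cases ha : G.Adj v w
      · simp [ha, G.adj_symm ha]
      · have : ¬ G.Adj w v := fun hh => ha (G.adj_symm hh)
        simp [ha, this]
  simp_rw [this]
  rw [Finset.sum_add_distrib, Finset.sum_ite_eq Finset.univ v, sum_adj]
  simp

lemma tr2_eq (G : SimpleGraph V) [DecidableRel G.Adj] :
    tr2 G = (((G.lapMatrix ℝ).trace)⁻¹)^2 * (G.lapMatrix ℝ * G.lapMatrix ℝ).trace := by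
  unfold tr2
  rw [rho_eq, Matrix.smul_mul, Matrix.mul_smul, smul_smul, Matrix.trace_smul, smul_eq_mul,
    pow_two]

lemma sum_eigs_eq_trace (A : Matrix V V ℝ) (hA : A.IsHermitian) :
    ∑ v, hA.eigenvalues v = A.trace := by
  nth_rewrite 2 [hA.spectral_theorem]
  rw [Unitary.conjStarAlgAut_apply]
  rw [Matrix.trace_mul_comm, ← Matrix.mul_assoc, Unitary.coe_star_mul_self, Matrix.one_mul]
  simp [Matrix.trace, Matrix.diag]

lemma sum_eigs_sq_eq_trace (A : Matrix V V ℝ) (hA : A.IsHermitian) :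
    ∑ v, (hA.eigenvalues v)^2 = (A * A).trace := by
  have h1 := hA.spectral_theorem
  rw [Unitary.conjStarAlgAut_apply] at h1
  set U : Matrix V V ℝ := ↑hA.eigenvectorUnitary with hU
  set D : Matrix V V ℝ := diagonal (RCLike.ofReal ∘ hA.eigenvalues) with hD
  have hsu : star U * U = 1 := Unitary.coe_star_mul_self _
  have hAA : A * A = U * (D * D) * star U := by
    calc A * A = (U * D * star U) * (U * D * star U) := by rw [← h1]
    _ = (U * D) * (star U * U) * (D * star U) := by noncomm_ring
    _ = U * (D * D) * star U := by rw [hsu]; noncomm_ring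
  rw [hAA, Matrix.trace_mul_comm, ← Matrix.mul_assoc, hsu, Matrix.one_mul, hD]
  simp [Matrix.diagonal_mul_diagonal, Matrix.trace, Matrix.diag, pow_two]

lemma eig_cubic (A : Matrix V V ℝ) (hA : A.IsHermitian) (c₂ c₁ : ℝ)
    (h : A * (A * A) = c₂ • (A * A) + c₁ • A) (v : V) :
    (hA.eigenvalues v)^3 = c₂ * (hA.eigenvalues v)^2 + c₁ * hA.eigenvalues v := by
  have hw := hA.mulVec_eigenvectorBasis v
  set w : V → ℝ := ⇑(hA.eigenvectorBasis v) with hwdef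
  have hw2 : (A * A) *ᵥ w = ((hA.eigenvalues v)^2) • w := by
    rw [← Matrix.mulVec_mulVec, hw, Matrix.mulVec_smul, hw, smul_smul, pow_two]
  have hw3 : (A * (A * A)) *ᵥ w = ((hA.eigenvalues v)^3) • w := by
    rw [← Matrix.mulVec_mulVec, hw2, Matrix.mulVec_smul, hw, smul_smul]
    module
  rw [h, Matrix.add_mulVec, Matrix.smul_mulVec, Matrix.smul_mulVec, hw2, hw] at hw3
  have hz : ((hA.eigenvalues v)^3 - (c₂ * (hA.eigenvalues v)^2 + c₁ * hA.eigenvalues v)) • w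
      = 0 := by
    rw [sub_smul, ← hw3]
    module
  rcases smul_eq_zero.mp hz with h0 | h0
  · linarith [sub_eq_zero.mp h0]
  · exfalso
    apply hA.eigenvectorBasis.orthonormal.ne_zero v
    ext i
    exact congrFun h0 i

lemma sum_three (f : V → ℝ) (g : ℝ → ℝ) (a b : ℝ) (hab : a ≠ b) (hg : g 0 = 0)
    (h : ∀ v, f v = 0 ∨ f v = a ∨ f v = b) :
    ∑ v, g (f v)
      = (Finset.univ.filter (fun v => f v = a)).card * g a
        + (Finset.univ.filter (fun v => f v = b)).card * g b := by
  rw [← Finset.sum_filter_add_sum_filter_not Finset.univ (fun v => f v = a)]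
  have h1 : ∑ v ∈ Finset.univ.filter (fun v => f v = a), g (f v)
      = (Finset.univ.filter (fun v => f v = a)).card * g a := by
    rw [Finset.sum_congr rfl (fun v hv => by
      rw [(Finset.mem_filter.mp hv).2]), Finset.sum_const, nsmul_eq_mul]
  have h2 : ∑ v ∈ Finset.univ.filter (fun v => ¬ f v = a), g (f v)
      = (Finset.univ.filter (fun v => f v = b)).card * g b := by
    rw [← Finset.sum_filter_add_sum_filter_not
      (Finset.univ.filter (fun v => ¬ f v = a)) (fun v => f v = b)]
    have h3 : (Finset.univ.filter (fun v => ¬ f v = a)).filter (fun v => f v = b)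
        = Finset.univ.filter (fun v => f v = b) := by
      rw [Finset.filter_filter]
      apply Finset.filter_congr
      intro v _
      constructor
      · exact fun hh => hh.2
      · exact fun hh => ⟨fun ha => hab (ha.symm.trans hh), hh⟩
    have h4 : ∑ v ∈ ((Finset.univ.filter (fun v => ¬ f v = a)).filter (fun v => ¬ f v = b)),
        g (f v) = 0 := by
      apply Finset.sum_eq_zero
      intro v hv
      have := Finset.mem_filter.mp hv
      have h5 := Finset.mem_filter.mp this.1
      rcases h v with h0 | h0 | h0
      · rw [h0, hg]
      · exact absurd h0 h5.2
      · exact absurd h0 this.2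
    rw [h3, h4, add_zero]
    rw [Finset.sum_congr rfl (fun v hv => by
      rw [(Finset.mem_filter.mp hv).2]), Finset.sum_const, nsmul_eq_mul]
  rw [h1, h2]

end Aux

/-! ### The star graph -/

instance starDec (n : ℕ) : DecidableRel (starOn n).Adj :=
  fun x y => inferInstanceAs (Decidable (x ≠ y ∧ (x.val = 0 ∨ y.val = 0)))

lemma star_adj {n : ℕ} (x y : Fin n) :
    (starOn n).Adj x y ↔ x ≠ y ∧ (x.val = 0 ∨ y.val = 0) := Iff.rfl

lemma fin_val_zero_iff {n : ℕ} [NeZero n] (y : Fin n) : y.val = 0 ↔ y = 0 := by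
  rw [Fin.ext_iff, Fin.val_zero]

lemma star_nf_zero (n : ℕ) [NeZero n] :
    (starOn n).neighborFinset (0 : Fin n) = Finset.univ.erase 0 := by
  ext y
  simp [SimpleGraph.mem_neighborFinset, star_adj, ne_comm, eq_comm, fin_val_zero_iff]

lemma star_degree_zero (n : ℕ) [NeZero n] : (starOn n).degree (0 : Fin n) = n - 1 := by
  rw [SimpleGraph.degree, star_nf_zero, Finset.card_erase_of_mem (Finset.mem_univ _),
    Finset.card_univ, Fintype.card_fin]

lemma star_nf_ne (n : ℕ) [NeZero n] (v : Fin n) (hv : v ≠ 0) :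
    (starOn n).neighborFinset v = {0} := by
  ext y
  simp only [SimpleGraph.mem_neighborFinset, star_adj, Finset.mem_singleton, fin_val_zero_iff]
  constructor
  · rintro ⟨hne, h0 | h0⟩
    · exact absurd h0 hv
    · exact h0
  · rintro rfl
    exact ⟨hv, Or.inr rfl⟩

lemma star_degree_ne (n : ℕ) [NeZero n] (v : Fin n) (hv : v ≠ 0) :
    (starOn n).degree v = 1 := by
  rw [SimpleGraph.degree, star_nf_ne n v hv, Finset.card_singleton]

lemma star_degree_zero' (n : ℕ) [NeZero n] : ((starOn n).degree (0 : Fin n) : ℝ) = n - 1 := by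
  rw [star_degree_zero, Nat.cast_sub (NeZero.one_le), Nat.cast_one]

lemma star_degree_ne' (n : ℕ) [NeZero n] (v : Fin n) (hv : v ≠ 0) :
    ((starOn n).degree v : ℝ) = 1 := by
  rw [star_degree_ne n v hv, Nat.cast_one]

lemma star_deg_sum (n : ℕ) [NeZero n] :
    ∑ v : Fin n, ((starOn n).degree v : ℝ) = 2 * n - 2 := by
  rw [← Finset.add_sum_erase _ _ (Finset.mem_univ (0 : Fin n)), star_degree_zero']
  rw [Finset.sum_congr rfl (fun v hv => star_degree_ne' n v (Finset.ne_of_mem_erase hv)),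
    Finset.sum_const, Finset.card_erase_of_mem (Finset.mem_univ _), Finset.card_univ,
    Fintype.card_fin, nsmul_eq_mul, Nat.cast_sub (NeZero.one_le), Nat.cast_one]
  ring

lemma star_deg_sq_sum (n : ℕ) [NeZero n] :
    ∑ v : Fin n, ((starOn n).degree v : ℝ)^2 = ((n:ℝ) - 1)^2 + ((n:ℝ) - 1) := by
  rw [← Finset.add_sum_erase _ _ (Finset.mem_univ (0 : Fin n)), star_degree_zero']
  rw [Finset.sum_congr rfl (fun v hv => by
    rw [star_degree_ne' n v (Finset.ne_of_mem_erase hv), one_pow]),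
    Finset.sum_const, Finset.card_erase_of_mem (Finset.mem_univ _), Finset.card_univ,
    Fintype.card_fin, nsmul_eq_mul, Nat.cast_sub (NeZero.one_le), Nat.cast_one, mul_one]

lemma vmv_mul {n : ℕ} (a b c d : Fin n → ℝ) :
    vecMulVec a b * vecMulVec c d = (b ⬝ᵥ c) • vecMulVec a d := by
  ext i j
  rw [Matrix.mul_apply, Matrix.smul_apply, vecMulVec_apply, smul_eq_mul, dotProduct,
    Finset.sum_mul]
  exact Finset.sum_congr rfl fun m _ => by rw [vecMulVec_apply, vecMulVec_apply]; ring

noncomputable def uu (n : ℕ) [NeZero n] : Fin n → ℝ := fun i => if i = 0 then 1 else 0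
noncomputable def oo (n : ℕ) : Fin n → ℝ := fun _ => 1

lemma uu_dot_uu (n : ℕ) [NeZero n] : uu n ⬝ᵥ uu n = 1 := by
  simp [uu, dotProduct, ite_and]

lemma uu_dot_oo (n : ℕ) [NeZero n] : uu n ⬝ᵥ oo n = 1 := by
  simp [uu, oo, dotProduct]

lemma oo_dot_uu (n : ℕ) [NeZero n] : oo n ⬝ᵥ uu n = 1 := by
  simp [uu, oo, dotProduct]

lemma oo_dot_oo (n : ℕ) : oo n ⬝ᵥ oo n = (n : ℝ) := by
  simp [oo, dotProduct]

lemma star_lap (n : ℕ) [NeZero n] :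
    (starOn n).lapMatrix ℝ =
      1 + (n : ℝ) • vecMulVec (uu n) (uu n) - vecMulVec (uu n) (oo n)
        - vecMulVec (oo n) (uu n) := by
  ext i k
  simp only [Matrix.sub_apply, Matrix.add_apply, Matrix.smul_apply, Matrix.one_apply,
    vecMulVec_apply, uu, oo, smul_eq_mul, lap_apply]
  by_cases hi : i = 0 <;> by_cases hk : k = 0
  · subst hi; subst hk
    simp [star_degree_zero' n]
  · have hik : ¬ i = k := by rintro rfl; exact hk hi
    subst hi
    have : (starOn n).Adj 0 k := ⟨fun h => hk h.symm, Or.inl rfl⟩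
    simp [hik, hk, this]
  · have hik : ¬ i = k := by rintro rfl; exact hi hk
    subst hk
    have : (starOn n).Adj i 0 := ⟨hi, Or.inr rfl⟩
    simp [hik, hi, this]
  · by_cases hik : i = k
    · subst hik
      simp [hi, star_degree_ne' n i hi]
    · have : ¬ (starOn n).Adj i k := by
        rintro ⟨h1, h2 | h2⟩
        · exact hi ((fin_val_zero_iff i).mp h2)
        · exact hk ((fin_val_zero_iff k).mp h2)
      simp [hik, hi, hk, this]

lemma star_cubic (n : ℕ) [NeZero n] :
    (starOn n).lapMatrix ℝ * ((starOn n).lapMatrix ℝ * (starOn n).lapMatrix ℝ)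
      = ((n : ℝ) + 1) • ((starOn n).lapMatrix ℝ * (starOn n).lapMatrix ℝ)
        + (-(n : ℝ)) • (starOn n).lapMatrix ℝ := by
  have hL := star_lap n
  set P := vecMulVec (uu n) (uu n)
  set X := vecMulVec (uu n) (oo n)
  set Y := vecMulVec (oo n) (uu n)
  set Q := vecMulVec (oo n) (oo n)
  have hPP : P * P = (1:ℝ) • P := by rw [vmv_mul, uu_dot_uu]
  have hPX : P * X = (1:ℝ) • X := by rw [vmv_mul, uu_dot_uu]
  have hPY : P * Y = (1:ℝ) • P := by rw [vmv_mul, uu_dot_oo]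
  have hXP : X * P = (1:ℝ) • P := by rw [vmv_mul, oo_dot_uu]
  have hXX : X * X = (1:ℝ) • X := by rw [vmv_mul, oo_dot_uu]
  have hXY : X * Y = (n:ℝ) • P := by rw [vmv_mul, oo_dot_oo]
  have hYP : Y * P = (1:ℝ) • Y := by rw [vmv_mul, uu_dot_uu]
  have hYX : Y * X = (1:ℝ) • Q := by rw [vmv_mul, uu_dot_uu]
  have hYY : Y * Y = (1:ℝ) • Y := by rw [vmv_mul, uu_dot_oo]
  have hQP : Q * P = (1:ℝ) • Y := by rw [vmv_mul, oo_dot_uu]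
  have hQX : Q * X = (1:ℝ) • Q := by rw [vmv_mul, oo_dot_uu]
  have hQY : Q * Y = (n:ℝ) • Y := by rw [vmv_mul, oo_dot_oo]
  have hPQ : P * Q = (1:ℝ) • X := by rw [vmv_mul, uu_dot_oo]
  have hXQ : X * Q = (n:ℝ) • X := by rw [vmv_mul, oo_dot_oo]
  have hYQ : Y * Q = (1:ℝ) • Q := by rw [vmv_mul, uu_dot_oo]
  have hQQ : Q * Q = (n:ℝ) • Q := by rw [vmv_mul, oo_dot_oo]
  have hLL : (starOn n).lapMatrix ℝ * (starOn n).lapMatrix ℝ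
      = 1 + ((n:ℝ) + (n:ℝ)^2) • P - ((n:ℝ)+1) • X - ((n:ℝ)+1) • Y + Q := by
    rw [hL]
    simp only [Matrix.add_mul, Matrix.sub_mul, Matrix.mul_add, Matrix.mul_sub, Matrix.one_mul,
      Matrix.mul_one, Matrix.smul_mul, Matrix.mul_smul, hPP, hPX, hPY, hXP, hXX, hXY, hYP, hYX,
      hYY, smul_smul]
    module
  rw [hLL, hL]
  simp only [Matrix.add_mul, Matrix.sub_mul, Matrix.mul_add, Matrix.mul_sub, Matrix.one_mul,
    Matrix.mul_one, Matrix.smul_mul, Matrix.mul_smul, hPP, hPX, hPY, hXP, hXX, hXY, hYP, hYX,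
    hYY, hQP, hQX, hQY, hPQ, hXQ, hYQ, hQQ, smul_smul]
  module

/-! ### The path graph -/

instance pathDec (n : ℕ) : DecidableRel (SimpleGraph.pathGraph n).Adj :=
  fun _ _ => decidable_of_iff _ (SimpleGraph.pathGraph_adj).symm

lemma sum_indicator_val (n c : ℕ) :
    ∑ w : Fin n, (if w.val = c then (1:ℝ) else 0) = if c < n then 1 else 0 := by
  by_cases hc : c < n
  · rw [if_pos hc, Finset.sum_eq_single (⟨c, hc⟩ : Fin n)]
    · simp
    · intro b _ hb
      exact if_neg fun h => hb (Fin.ext h)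
    · exact fun h => absurd (Finset.mem_univ _) h
  · rw [if_neg hc]
    refine Finset.sum_eq_zero fun w _ => if_neg fun (h : w.val = c) => hc (h ▸ w.isLt)

lemma path_deg (n : ℕ) (v : Fin n) :
    ((SimpleGraph.pathGraph n).degree v : ℝ)
      = (if v.val + 1 < n then 1 else 0) + (if 0 < v.val then 1 else 0) := by
  rw [← sum_adj]
  have key : ∀ w : Fin n, (if (SimpleGraph.pathGraph n).Adj v w then (1:ℝ) else 0)
      = (if w.val = v.val + 1 then (1:ℝ) else 0)
        + (if w.val = v.val - 1 ∧ 0 < v.val then 1 else 0) := by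
    intro w
    simp only [SimpleGraph.pathGraph_adj]
    have hw := w.isLt
    have hv := v.isLt
    split_ifs <;> (try norm_num) <;> omega
  simp_rw [key]
  rw [Finset.sum_add_distrib, sum_indicator_val]
  by_cases h0 : 0 < v.val
  · have : ∀ w : Fin n, (if w.val = v.val - 1 ∧ 0 < v.val then (1:ℝ) else 0)
        = (if w.val = v.val - 1 then 1 else 0) := by
      intro w; simp [h0]
    simp_rw [this]
    rw [sum_indicator_val, if_pos (by omega : v.val - 1 < n), if_pos h0]
  · have : ∀ w : Fin n, (if w.val = v.val - 1 ∧ 0 < v.val then (1:ℝ) else 0) = 0 := by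
      intro w; simp [h0]
    simp_rw [this]
    simp [h0]

lemma range_filter_card1 (n : ℕ) :
    ((Finset.range n).filter (fun i => i + 1 < n)).card = n - 1 := by
  rw [show (Finset.range n).filter (fun i => i + 1 < n) = Finset.range (n-1) by
    ext i; simp; omega]
  exact Finset.card_range _

lemma range_filter_card2 (n : ℕ) :
    ((Finset.range n).filter (fun i => 0 < i)).card = n - 1 := by
  rw [show (Finset.range n).filter (fun i => 0 < i) = Finset.Ico 1 n by
    ext i; simp; omega]
  rw [Nat.card_Ico]

lemma range_filter_card3 (n : ℕ) :
    ((Finset.range n).filter (fun i => i + 1 < n ∧ 0 < i)).card = n - 2 := by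
  rw [show (Finset.range n).filter (fun i => i + 1 < n ∧ 0 < i) = Finset.Ico 1 (n-1) by
    ext i; simp; omega]
  rw [Nat.card_Ico]
  omega

lemma path_deg_sum (n : ℕ) (hn : 2 ≤ n) :
    ∑ v : Fin n, ((SimpleGraph.pathGraph n).degree v : ℝ) = 2 * n - 2 := by
  simp_rw [path_deg]
  rw [Finset.sum_add_distrib,
    Fin.sum_univ_eq_sum_range (fun i => if i + 1 < n then (1:ℝ) else 0) n,
    Fin.sum_univ_eq_sum_range (fun i => if 0 < i then (1:ℝ) else 0) n,
    Finset.sum_boole, Finset.sum_boole, range_filter_card1, range_filter_card2,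
    Nat.cast_sub (by omega : 1 ≤ n), Nat.cast_one]
  ring

lemma path_deg_sq_sum (n : ℕ) (hn : 2 ≤ n) :
    ∑ v : Fin n, ((SimpleGraph.pathGraph n).degree v : ℝ)^2 = 4 * n - 6 := by
  have key : ∀ v : Fin n, ((SimpleGraph.pathGraph n).degree v : ℝ)^2
      = (if v.val + 1 < n then 1 else 0) + (if 0 < v.val then 1 else 0)
        + 2 * (if v.val + 1 < n ∧ 0 < v.val then 1 else 0) := by
    intro v
    rw [path_deg]
    split_ifs <;> (try norm_num) <;> tauto
  simp_rw [key]
  rw [Finset.sum_add_distrib, Finset.sum_add_distrib, ← Finset.mul_sum,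
    Fin.sum_univ_eq_sum_range (fun i => if i + 1 < n then (1:ℝ) else 0) n,
    Fin.sum_univ_eq_sum_range (fun i => if 0 < i then (1:ℝ) else 0) n,
    Fin.sum_univ_eq_sum_range (fun i => if i + 1 < n ∧ 0 < i then (1:ℝ) else 0) n,
    Finset.sum_boole, Finset.sum_boole, Finset.sum_boole,
    range_filter_card1, range_filter_card2, range_filter_card3,
    Nat.cast_sub (by omega : 1 ≤ n), Nat.cast_sub (by omega : 2 ≤ n),
    Nat.cast_one, Nat.cast_two]
  ring

/-! ### The inequality -/

lemma nat_ineq {n : ℕ} (hn : 6 ≤ n) :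
    (6*n-8)^(2*n-2) ≤ n^n * (2*n-2)^(2*n-2) := by
  by_cases h9 : n < 9
  · interval_cases n <;> norm_num
  · push_neg at h9
    calc (6*n-8)^(2*n-2) ≤ (6*n-6)^(2*n-2) := Nat.pow_le_pow_left (by omega) _
    _ = (3*(2*n-2))^(2*n-2) := by congr 1; omega
    _ = 3^(2*n-2) * (2*n-2)^(2*n-2) := by rw [Nat.mul_pow]
    _ = 9^(n-1) * (2*n-2)^(2*n-2) := by
        rw [show 2*n-2 = 2*(n-1) by omega, pow_mul]
        norm_num
    _ ≤ n^n * (2*n-2)^(2*n-2) := by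
        apply Nat.mul_le_mul_right
        calc 9^(n-1) ≤ n^(n-1) := Nat.pow_le_pow_left (by omega) _
        _ ≤ n^n := Nat.pow_le_pow_right (by omega) (by omega)

lemma part2 {n : ℕ} (hn : 6 ≤ n) :
    Real.logb 2 ((2 * (n : ℝ) - 2) ^ 2 / (6 * n - 8)) ≥
      Real.logb 2 (2 * (n : ℝ) - 2) - ((n : ℝ) / (2 * n - 2)) * Real.logb 2 n := by
  have hn' : (6:ℝ) ≤ (n:ℝ) := by exact_mod_cast hn
  have hd : (0:ℝ) < 2 * n - 2 := by linarith
  have hs : (0:ℝ) < 6 * n - 8 := by linarith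
  have hc : (0:ℝ) < n := by linarith
  have key : ((6*n-8:ℕ):ℝ)^(2*n-2) ≤ ((n:ℝ))^n * ((2*n-2:ℕ):ℝ)^(2*n-2) := by
    exact_mod_cast Nat.cast_le.mpr (nat_ineq hn)
  have hcast1 : ((6*n-8:ℕ):ℝ) = 6*(n:ℝ)-8 := by
    push_cast [Nat.cast_sub (by omega : 8 ≤ 6*n)]; ring
  have hcast2 : ((2*n-2:ℕ):ℝ) = 2*(n:ℝ)-2 := by
    push_cast [Nat.cast_sub (by omega : 2 ≤ 2*n)]; ring
  rw [hcast1, hcast2] at key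
  have hlog := Real.logb_le_logb_of_le (by norm_num : (1:ℝ) < 2)
    (by positivity : (0:ℝ) < (6*(n:ℝ)-8)^(2*n-2)) key
  rw [Real.logb_mul (by positivity) (by positivity), Real.logb_pow, Real.logb_pow,
    Real.logb_pow] at hlog
  rw [hcast2] at hlog
  rw [ge_iff_le, ← sub_nonneg]
  have expand : Real.logb 2 ((2*(n:ℝ)-2)^2/(6*(n:ℝ)-8))
      - (Real.logb 2 (2*(n:ℝ)-2) - ((n:ℝ)/(2*(n:ℝ)-2))*Real.logb 2 (n:ℝ))
      = ((n:ℝ) * Real.logb 2 (n:ℝ) + (2*(n:ℝ)-2)*Real.logb 2 (2*(n:ℝ)-2)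
          - (2*(n:ℝ)-2)*Real.logb 2 (6*(n:ℝ)-8))/(2*(n:ℝ)-2) := by
    rw [Real.logb_div (by positivity) (by positivity), Real.logb_pow]
    have hn1 : (n:ℝ) - 1 ≠ 0 := by linarith
    field_simp
    ring
  rw [expand]
  apply div_nonneg _ (le_of_lt hd)
  linarith [hlog]

/-! ### Main theorem -/

theorem path_renyi2_ge_star {n : ℕ} (hn : 6 ≤ n) :
    renyi2 (SimpleGraph.pathGraph n) =
      Real.logb 2 ((2 * (n : ℝ) - 2) ^ 2 / (6 * n - 8)) ∧
    Real.logb 2 ((2 * (n : ℝ) - 2) ^ 2 / (6 * n - 8)) ≥ Real.logb 2 (2 * (n : ℝ) - 2) - ((n : ℝ) / (2 * n - 2)) * Real.logb 2 n ∧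
    Real.logb 2 (2 * (n : ℝ) - 2) - ((n : ℝ) / (2 * n - 2)) * Real.logb 2 n = vnEntropy (starOn n) := by
  haveI : NeZero n := ⟨by omega⟩
  have hn' : (6:ℝ) ≤ (n:ℝ) := by exact_mod_cast hn
  have hd : (0:ℝ) < 2 * n - 2 := by linarith
  have hs : (0:ℝ) < 6 * n - 8 := by linarith
  have hc : (0:ℝ) < n := by linarith
  refine ⟨?_, part2 hn, ?_⟩
  · -- Part 1: Rényi entropy of the path graph
    have htr : ((SimpleGraph.pathGraph n).lapMatrix ℝ).trace = 2*(n:ℝ)-2 := by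
      rw [trace_lap, path_deg_sum n (by omega)]
    have htr2 : ((SimpleGraph.pathGraph n).lapMatrix ℝ
        * (SimpleGraph.pathGraph n).lapMatrix ℝ).trace = 6*(n:ℝ)-8 := by
      rw [trace_lap_sq, path_deg_sq_sum n (by omega), path_deg_sum n (by omega)]
      ring
    have hval : tr2 (SimpleGraph.pathGraph n) = (6*(n:ℝ)-8)/(2*(n:ℝ)-2)^2 := by
      rw [tr2_eq, htr, htr2]
      field_simp
    show - Real.logb 2 (tr2 (SimpleGraph.pathGraph n)) = _
    rw [hval, show (2*(n:ℝ)-2)^2/(6*(n:ℝ)-8) = ((6*(n:ℝ)-8)/(2*(n:ℝ)-2)^2)⁻¹ by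
      rw [inv_div], Real.logb_inv]
  · -- Part 3: von Neumann entropy of the star
    set G := starOn n with hG
    set t : ℝ := ((starOn n).lapMatrix ℝ).trace with ht
    have htval : t = 2*(n:ℝ)-2 := by rw [ht, trace_lap, star_deg_sum]
    have htne : t ≠ 0 := by rw [htval]; linarith
    have hab : (2*(n:ℝ)-2)⁻¹ ≠ (n:ℝ) * (2*(n:ℝ)-2)⁻¹ := by
      intro h
      have h2 : (2*(n:ℝ)-2)⁻¹ ≠ 0 := by positivity
      have h3 : (1:ℝ) = n := by
        have := mul_right_cancel₀ h2 (by linarith [h] : 1 * (2*(n:ℝ)-2)⁻¹ = (n:ℝ) * (2*(n:ℝ)-2)⁻¹)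
        linarith [this]
      linarith
    -- the cubic identity for rho
    have hrho3 : rho G * (rho G * rho G)
        = (((n:ℝ)+1) * t⁻¹) • (rho G * rho G) + (-(n:ℝ) * (t⁻¹)^2) • rho G := by
      rw [rho_eq G, ← ht]
      simp only [Matrix.smul_mul, Matrix.mul_smul, smul_smul]
      rw [star_cubic n]
      simp only [smul_add, smul_smul]
      module
    -- every eigenvalue is 0, a or b
    have heig : ∀ v : Fin n, eigs G v = 0 ∨ eigs G v = (2*(n:ℝ)-2)⁻¹
        ∨ eigs G v = (n:ℝ) * (2*(n:ℝ)-2)⁻¹ := by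
      intro v
      have hcube := eig_cubic (rho G) (rho_isHermitian G) _ _ hrho3 v
      rw [show (rho_isHermitian G).eigenvalues v = eigs G v from rfl] at hcube
      have hfac : eigs G v * ((eigs G v - t⁻¹) * (eigs G v - (n:ℝ) * t⁻¹)) = 0 := by
        linear_combination hcube
      have hta : t⁻¹ = (2*(n:ℝ)-2)⁻¹ := by rw [htval]
      rcases mul_eq_zero.mp hfac with h0 | h0
      · exact Or.inl h0
      · rcases mul_eq_zero.mp h0 with h1 | h1
        · exact Or.inr (Or.inl (by rw [← hta]; linarith [sub_eq_zero.mp h1]))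
        · refine Or.inr (Or.inr ?_)
          rw [← hta]
          linarith [sub_eq_zero.mp h1]
    set pr : ℝ := ((Finset.univ.filter (fun v => eigs G v = (2*(n:ℝ)-2)⁻¹)).card : ℝ) with hpr
    set qr : ℝ := ((Finset.univ.filter
      (fun v => eigs G v = (n:ℝ) * (2*(n:ℝ)-2)⁻¹)).card : ℝ) with hqr
    -- sum of eigenvalues is 1
    have hsum1 : ∑ v, eigs G v = 1 := by
      show ∑ v, (rho_isHermitian G).eigenvalues v = 1
      rw [sum_eigs_eq_trace]
      rw [rho_eq G, Matrix.trace_smul, ← ht, smul_eq_mul, inv_mul_cancel₀ htne]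
    have hsum2 : ∑ v, (eigs G v)^2 = ((n:ℝ)^2+(n:ℝ)-2)/(2*(n:ℝ)-2)^2 := by
      show ∑ v, ((rho_isHermitian G).eigenvalues v)^2 = _
      rw [sum_eigs_sq_eq_trace]
      have : (rho G * rho G).trace = tr2 G := rfl
      rw [this, tr2_eq, ← ht, htval, trace_lap_sq, star_deg_sq_sum, star_deg_sum]
      have hn1 : (n:ℝ) - 1 ≠ 0 := by linarith
      field_simp
      ring
    have e1 : pr * (2*(n:ℝ)-2)⁻¹ + qr * ((n:ℝ) * (2*(n:ℝ)-2)⁻¹) = 1 := by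
      rw [← hsum1, sum_three (eigs G) (fun x => x) _ _ hab rfl heig]
    have e2 : pr * ((2*(n:ℝ)-2)⁻¹)^2 + qr * ((n:ℝ) * (2*(n:ℝ)-2)⁻¹)^2
        = ((n:ℝ)^2+(n:ℝ)-2)/(2*(n:ℝ)-2)^2 := by
      rw [← hsum2, sum_three (eigs G) (fun x => x^2) _ _ hab (by norm_num) heig]
    -- solve for pr and qr
    have e1' : pr + qr * n = 2*(n:ℝ)-2 := by
      have h7 := congrArg (fun z => z * (2*(n:ℝ)-2)) e1
      rw [add_mul, mul_assoc, mul_assoc, inv_mul_cancel₀ hd.ne', mul_one,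
        mul_assoc, inv_mul_cancel₀ hd.ne', mul_one, one_mul] at h7
      linarith
    have e2' : pr + qr * (n:ℝ)^2 = (n:ℝ)^2+(n:ℝ)-2 := by
      have h7 := congrArg (fun z => z * (2*(n:ℝ)-2)^2) e2
      rw [add_mul, div_mul_cancel₀ _ (by positivity : (2*(n:ℝ)-2)^2 ≠ 0)] at h7
      rw [show pr * ((2*(n:ℝ)-2)⁻¹)^2 * (2*(n:ℝ)-2)^2
          = pr * (((2*(n:ℝ)-2)⁻¹ * (2*(n:ℝ)-2))^2) by ring,
        show qr * ((n:ℝ) * (2*(n:ℝ)-2)⁻¹)^2 * (2*(n:ℝ)-2)^2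
          = qr * ((n:ℝ)^2 * ((2*(n:ℝ)-2)⁻¹ * (2*(n:ℝ)-2))^2) by ring,
        inv_mul_cancel₀ hd.ne'] at h7
      nlinarith [h7]
    have hq : qr = 1 := by
      have h6 : (n:ℝ)^2 - n ≠ 0 := by nlinarith
      have h5 : qr * ((n:ℝ)^2 - n) = 1 * ((n:ℝ)^2 - n) := by linarith
      exact mul_right_cancel₀ h6 h5
    have hp : pr = (n:ℝ) - 2 := by
      rw [hq] at e1'
      linarith
    -- compute the entropy
    have hent : vnEntropy G
        = pr * (-((2*(n:ℝ)-2)⁻¹ * Real.logb 2 ((2*(n:ℝ)-2)⁻¹)))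
          + qr * (-(((n:ℝ) * (2*(n:ℝ)-2)⁻¹)
              * Real.logb 2 ((n:ℝ) * (2*(n:ℝ)-2)⁻¹))) := by
      unfold vnEntropy
      rw [sum_three (eigs G) (fun x => -(x * Real.logb 2 x)) _ _ hab (by simp) heig]
    rw [hent, hp, hq]
    rw [Real.logb_inv,
      Real.logb_mul (by positivity) (by positivity), Real.logb_inv]
    have hn1 : (n:ℝ) - 1 ≠ 0 := by linarith
    field_simp
    ring

end VNE
end
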